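/- Let s* = min_{X ∈ L⁻¹(y)} ∑_{J∈K} rank(X^{[J]}). Suppose for each γ > 0, X_γ is a global minimizer of f^K_γ over L⁻¹(y), and X* := lim_{γ↘0} X_γ exists. Then ∑_{J∈K} rank((X*)^{[J]}) = s* and X* minimizes the product ∏_{J∈K} ∏_{i=1}^{rank(X^{[J]})} σ_i^{(J)}(X) among all X ∈ L⁻¹(y) with ∑_{J∈K} rank(X^{[J]}) = s*. Moreover, if there is only one X_{s*} ∈ L⁻¹(y) with ∑_{J∈K} rank(X_{s*}^{[J]}) = s*, then X_γ → X_{s*} as γ ↘ 0. -/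

import Mathlib

open scoped BigOperators
open Matrix

noncomputable section

abbrev TIdx (d : ℕ) (n : Fin d → ℕ) : Type := ∀ μ : Fin d, Fin (n μ)
abbrev Tensor (d : ℕ) (n : Fin d → ℕ) : Type := EuclideanSpace ℝ (TIdx d n)

def nS {d : ℕ} (n : Fin d → ℕ) (S : Finset (Fin d)) : ℕ := ∏ μ ∈ S, n μ

def mat {d : ℕ} (n : Fin d → ℕ) (X : Tensor d n) (J : Finset (Fin d)) :
    Matrix (∀ μ : {μ : Fin d // μ ∈ J}, Fin (n μ.1))
      (∀ μ : {μ : Fin d // μ ∉ J}, Fin (n μ.1)) ℝ :=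
  Matrix.of fun a b => X fun μ => if h : μ ∈ J then a ⟨μ, h⟩ else b ⟨μ, h⟩

def svalsSq {m k : Type*} [Fintype m] [Fintype k] [DecidableEq m]
    (A : Matrix m k ℝ) : ℕ → ℝ := fun i =>
  ((((Finset.univ.val.map
        (Matrix.isHermitian_mul_conjTranspose_self A).eigenvalues).sort (· ≤ ·)).reverse).getD i 0)

def svals {m k : Type*} [Fintype m] [Fintype k] [DecidableEq m]
    (A : Matrix m k ℝ) : ℕ → ℝ := fun i => Real.sqrt (svalsSq A i)

def minorDet {m k : Type*} [DecidableEq m] [DecidableEq k]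
    (A : Matrix m k ℝ) (s : ℕ) (I : Finset m) (J : Finset k) : ℝ :=
  if hI : I.card = s then
    if hJ : J.card = s then
      Matrix.det (Matrix.of fun a b : Fin s =>
        A ((I.equivFinOfCardEq hI).symm a).1 ((J.equivFinOfCardEq hJ).symm b).1)
    else 0
  else 0

def detSq {m k : Type*} [Fintype m] [Fintype k] [DecidableEq m] [DecidableEq k]
    (A : Matrix m k ℝ) (s : ℕ) : ℝ :=
  ∑ I ∈ Finset.powersetCard s (Finset.univ : Finset m),
    ∑ J ∈ Finset.powersetCard s (Finset.univ : Finset k), (minorDet A s I J) ^ 2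

def fK {d : ℕ} (n : Fin d → ℕ) (𝒥 : Finset (Finset (Fin d))) (γ : ℝ) (X : Tensor d n) : ℝ :=
  Real.log (∏ J ∈ 𝒥, (mat n X J * (mat n X J)ᴴ + γ • 1).det)

def wmat {d : ℕ} (n : Fin d → ℕ) (γ : ℝ) (Xw : Tensor d n) (J : Finset (Fin d)) :=
  (mat n Xw J * (mat n Xw J)ᴴ + γ • (1 : Matrix _ _ ℝ))⁻¹

def Q {d : ℕ} (n : Fin d → ℕ) (𝒥 : Finset (Finset (Fin d))) (γ : ℝ) (Xw X' : Tensor d n) : ℝ :=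
  ∑ J ∈ 𝒥, ((mat n X' J)ᴴ * wmat n γ Xw J * mat n X' J).trace

def KS {d : ℕ} (K S : Finset (Finset (Fin d))) : Finset (Finset (Fin d)) :=
  (K \ S) ∪ S.image (·ᶜ)

def unmat {d : ℕ} (n : Fin d → ℕ) (J : Finset (Fin d))
    (A : Matrix (∀ μ : {μ : Fin d // μ ∈ J}, Fin (n μ.1))
      (∀ μ : {μ : Fin d // μ ∉ J}, Fin (n μ.1)) ℝ) : Tensor d n :=
  WithLp.toLp 2 (fun idx : TIdx d n => A (fun μ => idx μ.1) (fun μ => idx μ.1))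

def Wop {d : ℕ} (n : Fin d → ℕ) (K : Finset (Finset (Fin d))) (γ : ℝ)
    (Xw X' : Tensor d n) : Tensor d n :=
  ∑ J ∈ K, unmat n J (wmat n γ Xw J * mat n X' J)



set_option linter.unusedSectionVars false
set_option maxHeartbeats 1000000

namespace Aux
open Finset Polynomial


variable {ι : Type*} [Fintype ι] [DecidableEq ι]

def esym (w : ι → ℝ) (s : ℕ) : ℝ :=
  ∑ S ∈ Finset.powersetCard s (Finset.univ : Finset ι), ∏ i ∈ S, w i

lemma esym_nonneg {w : ι → ℝ} (hw : ∀ i, 0 ≤ w i) (s : ℕ) : 0 ≤ esym w s :=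
  Finset.sum_nonneg fun _ _ => Finset.prod_nonneg fun i _ => hw i

lemma prod_add_const (w : ι → ℝ) (γ : ℝ) :
    ∏ i, (w i + γ)
      = ∑ s ∈ Finset.range (Fintype.card ι + 1), esym w s * γ ^ (Fintype.card ι - s) := by
  rw [Finset.prod_add, Finset.powerset_card_biUnion, Finset.sum_biUnion
    ((Finset.pairwise_disjoint_powersetCard _).set_pairwise _), Finset.card_univ]
  refine Finset.sum_congr rfl fun s _ => ?_
  rw [esym, Finset.sum_mul]
  refine Finset.sum_congr rfl fun S hS => ?_
  rw [Finset.prod_const, Finset.card_univ_diff, (Finset.mem_powersetCard.mp hS).2]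

lemma det_add_smul_one {M : Matrix ι ι ℝ} (hM : M.IsHermitian) (γ : ℝ) :
    (M + γ • 1).det = ∏ i, (hM.eigenvalues i + γ) := by
  set U : Matrix ι ι ℝ := (Matrix.IsHermitian.eigenvectorUnitary hM : Matrix ι ι ℝ) with hUdef
  have hU : U * star U = 1 :=
    Matrix.mem_unitaryGroup_iff.mp (Matrix.IsHermitian.eigenvectorUnitary hM).2
  have key : M + γ • 1 = U * (Matrix.diagonal (fun i => hM.eigenvalues i + γ)) * star U := by
    have h1 : Matrix.diagonal (fun i => hM.eigenvalues i + γ)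
        = Matrix.diagonal (RCLike.ofReal ∘ hM.eigenvalues) + γ • (1 : Matrix ι ι ℝ) := by
      ext i j
      rcases eq_or_ne i j with h | h <;>
        simp [Matrix.diagonal_apply, Matrix.one_apply, h]
    rw [h1, Matrix.mul_add, Matrix.add_mul]
    congr 1
    · exact hM.spectral_theorem
    · rw [Matrix.mul_smul, mul_one, Matrix.smul_mul, hU]
  rw [key, Matrix.det_mul, Matrix.det_mul, Matrix.det_diagonal, mul_right_comm,
    ← Matrix.det_mul, hU, Matrix.det_one, one_mul]


lemma esym_eq_zero {w : ι → ℝ} {s : ℕ}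
    (h : (Finset.univ.filter (fun i => w i ≠ 0)).card < s) : esym w s = 0 := by
  refine Finset.sum_eq_zero fun S hS => ?_
  by_contra hne
  have hsub : S ⊆ Finset.univ.filter (fun i => w i ≠ 0) := fun i hi => by
    simp only [Finset.mem_filter, Finset.mem_univ, true_and]
    exact fun h0 => hne (Finset.prod_eq_zero hi h0)
  have h2 := Finset.card_le_card hsub
  rw [(Finset.mem_powersetCard.mp hS).2] at h2
  omega

lemma esym_card_filter (w : ι → ℝ) :
    esym w (Finset.univ.filter (fun i => w i ≠ 0)).card
      = ∏ i ∈ Finset.univ.filter (fun i => w i ≠ 0), w i := by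
  rw [esym, Finset.sum_eq_single (Finset.univ.filter (fun i => w i ≠ 0))]
  · intro S hS hne
    by_contra hP
    have hsub : S ⊆ Finset.univ.filter (fun i => w i ≠ 0) := fun i hi => by
      simp only [Finset.mem_filter, Finset.mem_univ, true_and]
      exact fun h0 => hP (Finset.prod_eq_zero hi h0)
    exact hne (Finset.eq_of_subset_of_card_le hsub
      (le_of_eq (Finset.mem_powersetCard.mp hS).2.symm))
  · intro h
    exact absurd (Finset.mem_powersetCard.mpr ⟨Finset.subset_univ _, rfl⟩) h



lemma prod_range_getD (l : List ℝ) : ∀ t ≤ l.length,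
    ∏ i ∈ Finset.range t, l.getD i 0 = (l.take t).prod := by
  intro t
  induction t with
  | zero => simp
  | succ t ih =>
    intro h
    rw [Finset.prod_range_succ, ih (by omega), List.prod_take_succ l t (by omega),
      List.getD_eq_getElem l 0 (by omega)]

lemma sorted_list_facts (l : List ℝ) (hsort : l.Pairwise (fun a b => b ≤ a))
    (hnn : ∀ x ∈ l, 0 ≤ x) {r : ℕ} (hcount : l.countP (fun x => decide (x ≠ 0)) = r) :
    (∀ i < r, l.getD i 0 ≠ 0) ∧ (∀ i, r ≤ i → l.getD i 0 = 0) ∧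
      ∏ i ∈ Finset.range r, l.getD i 0 = (l.filter (fun x => decide (x ≠ 0))).prod := by
  have hpg := List.pairwise_iff_getElem.mp hsort
  have hlen : r ≤ l.length := by
    rw [← hcount, List.countP_eq_length_filter]
    exact List.length_filter_le _ _
  -- A1 : entries at positions ≥ r vanish
  have A1 : ∀ i, r ≤ i → l.getD i 0 = 0 := by
    intro i hi
    rcases Nat.lt_or_ge i l.length with hil | hil
    · rw [List.getD_eq_getElem l 0 hil]
      by_contra h0
      have hpos : (0:ℝ) < l[i] := lt_of_le_of_ne (hnn _ (l.getElem_mem hil)) (Ne.symm h0)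
      have htake : (l.take (i+1)).countP (fun x => decide (x ≠ 0)) = i + 1 := by
        rw [List.countP_eq_length.mpr, List.length_take]
        · omega
        · intro a ha
          obtain ⟨j, hj, rfl⟩ := List.mem_take_iff_getElem.mp ha
          have hji : j < i + 1 := by
            have : (l.take (i+1)).length = min (i+1) l.length := List.length_take; omega
          have : l[i] ≤ l[j] := by
            rcases Nat.lt_or_ge j i with hlt | hge
            · exact hpg j i (by omega) hil hlt
            · have : j = i := by omega
              subst this; exact le_refl _
          simp only [decide_eq_true_eq]
          nlinarith
      have hsplit : l.countP (fun x => decide (x ≠ 0))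
          = (l.take (i+1)).countP (fun x => decide (x ≠ 0))
            + (l.drop (i+1)).countP (fun x => decide (x ≠ 0)) := by
        rw [← List.countP_append, List.take_append_drop]
      omega
    · exact List.getD_eq_default _ _ hil
  -- A2 : entries at positions < r are nonzero
  have A2 : ∀ i < r, l.getD i 0 ≠ 0 := by
    intro i hir
    have hil : i < l.length := by omega
    rw [List.getD_eq_getElem l 0 hil]
    by_contra h0
    have hdrop : (l.drop i).countP (fun x => decide (x ≠ 0)) = 0 := by
      rw [List.countP_eq_zero]
      intro a ha
      obtain ⟨j, hj, rfl⟩ := List.mem_drop_iff_getElem.mp ha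
      have hle : l[i + j] ≤ l[i] := by
        rcases Nat.eq_zero_or_pos j with rfl | hjpos
        · simp
        · exact hpg i (i+j) hil (by omega) (by omega)
      have hge : (0:ℝ) ≤ l[i+j] := hnn _ (l.getElem_mem _)
      simp only [decide_eq_true_eq, ne_eq, not_not]
      nlinarith [h0]
    have hsplit : l.countP (fun x => decide (x ≠ 0))
        = (l.take i).countP (fun x => decide (x ≠ 0))
          + (l.drop i).countP (fun x => decide (x ≠ 0)) := by
      rw [← List.countP_append, List.take_append_drop]
    have htk : (l.take i).countP (fun x => decide (x ≠ 0)) ≤ i := by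
      calc (l.take i).countP (fun x => decide (x ≠ 0)) ≤ (l.take i).length := by
            rw [List.countP_eq_length_filter]; exact List.length_filter_le _ _
        _ ≤ i := by rw [List.length_take]; omega
    omega
  refine ⟨A2, A1, ?_⟩
  have hfil : l.filter (fun x => decide (x ≠ 0)) = l.take r := by
    conv_lhs => rw [← List.take_append_drop r l]
    rw [List.filter_append, List.filter_eq_self.mpr, List.filter_eq_nil_iff.mpr,
      List.append_nil]
    · intro a ha
      obtain ⟨j, hj, rfl⟩ := List.mem_drop_iff_getElem.mp ha
      have := A1 (r + j) (by omega)
      rw [List.getD_eq_getElem l 0 (by omega)] at this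
      simp [this]
    · intro a ha
      obtain ⟨j, hj, rfl⟩ := List.mem_take_iff_getElem.mp ha
      have hjr : j < r := by
        have : (l.take r).length = min r l.length := List.length_take; omega
      have := A2 j hjr
      rw [List.getD_eq_getElem l 0 (by omega)] at this
      simpa using this
  rw [hfil, prod_range_getD l r hlen]


section MatrixFacts
variable {m k : Type*} [Fintype m] [Fintype k] [DecidableEq m]

def eigA (A : Matrix m k ℝ) : m → ℝ :=
  (Matrix.isHermitian_mul_conjTranspose_self A).eigenvalues

lemma eigA_nonneg (A : Matrix m k ℝ) (i : m) : 0 ≤ eigA A i :=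
  (Matrix.posSemidef_self_mul_conjTranspose A).eigenvalues_nonneg i

def eA (A : Matrix m k ℝ) (s : ℕ) : ℝ := esym (eigA A) s

lemma eA_nonneg (A : Matrix m k ℝ) (s : ℕ) : 0 ≤ eA A s :=
  esym_nonneg (eigA_nonneg A) s

lemma rank_eq_card (A : Matrix m k ℝ) :
    A.rank = (Finset.univ.filter (fun i => eigA A i ≠ 0)).card := by
  rw [← Matrix.rank_self_mul_conjTranspose A,
    (Matrix.isHermitian_mul_conjTranspose_self A).rank_eq_card_non_zero_eigs,
    Fintype.card_subtype]
  rfl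

lemma rank_le_cardm (A : Matrix m k ℝ) : A.rank ≤ Fintype.card m :=
  A.rank_le_card_height

lemma detgamma_eq (A : Matrix m k ℝ) (γ : ℝ) :
    (A * Aᴴ + γ • 1).det
      = ∑ s ∈ Finset.range (Fintype.card m + 1), eA A s * γ ^ (Fintype.card m - s) := by
  rw [det_add_smul_one (Matrix.isHermitian_mul_conjTranspose_self A) γ,
    prod_add_const]
  rfl

lemma det_pos (A : Matrix m k ℝ) {γ : ℝ} (hγ : 0 < γ) :
    0 < (A * Aᴴ + γ • 1).det := by
  rw [det_add_smul_one (Matrix.isHermitian_mul_conjTranspose_self A) γ]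
  exact Finset.prod_pos fun i _ => by
    have := eigA_nonneg A i
    show (0:ℝ) < eigA A i + γ
    linarith

lemma eA_eq_zero (A : Matrix m k ℝ) {s : ℕ} (h : A.rank < s) : eA A s = 0 :=
  esym_eq_zero (by rw [← rank_eq_card]; exact h)

lemma eA_rank_pos (A : Matrix m k ℝ) : 0 < eA A A.rank := by
  rw [eA, rank_eq_card, esym_card_filter]
  refine Finset.prod_pos fun i hi => ?_
  have h := (Finset.mem_filter.mp hi).2
  have := eigA_nonneg A i
  exact lt_of_le_of_ne this (Ne.symm h)

lemma det_lower (A : Matrix m k ℝ) {γ : ℝ} (hγ : 0 ≤ γ) {t : ℕ}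
    (ht : t ≤ Fintype.card m) :
    eA A t * γ ^ (Fintype.card m - t) ≤ (A * Aᴴ + γ • 1).det := by
  rw [detgamma_eq]
  refine Finset.single_le_sum (f := fun s => eA A s * γ ^ (Fintype.card m - s))
    (fun s _ => mul_nonneg (eA_nonneg A s) (pow_nonneg hγ _))
    (Finset.mem_range.mpr (by omega))

lemma det_upper (A : Matrix m k ℝ) {γ : ℝ} (h0 : 0 ≤ γ) (h1 : γ ≤ 1) :
    (A * Aᴴ + γ • 1).det
      ≤ (∑ s ∈ Finset.range (Fintype.card m + 1), eA A s)
          * γ ^ (Fintype.card m - A.rank) := by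
  rw [detgamma_eq, Finset.sum_mul]
  refine Finset.sum_le_sum fun s _ => ?_
  rcases le_or_gt s A.rank with h | h
  · exact mul_le_mul_of_nonneg_left
      (pow_le_pow_of_le_one h0 h1 (by omega)) (eA_nonneg A s)
  · rw [eA_eq_zero A h, zero_mul, zero_mul]

def phiA (A : Matrix m k ℝ) (γ : ℝ) : ℝ :=
  ∑ s ∈ Finset.range (A.rank + 1), eA A s * γ ^ (A.rank - s)

lemma det_eq_phi (A : Matrix m k ℝ) (γ : ℝ) :
    (A * Aᴴ + γ • 1).det = γ ^ (Fintype.card m - A.rank) * phiA A γ := by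
  rw [detgamma_eq, phiA, Finset.mul_sum]
  rw [← Finset.sum_subset (Finset.range_subset_range.mpr
      (by have := rank_le_cardm A; omega : A.rank + 1 ≤ Fintype.card m + 1))
      (fun s _ hs => by
        rw [eA_eq_zero A (by simp only [Finset.mem_range] at hs ⊢; omega), zero_mul])]
  refine Finset.sum_congr rfl fun s hs => ?_
  have hs' : s ≤ A.rank := by simp only [Finset.mem_range] at hs; omega
  have hr := rank_le_cardm A
  rw [show Fintype.card m - s = (Fintype.card m - A.rank) + (A.rank - s) by omega, pow_add]
  ring

lemma tendsto_phi (A : Matrix m k ℝ) :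
    Filter.Tendsto (phiA A) (nhds 0) (nhds (eA A A.rank)) := by
  have hc : Continuous (phiA A) :=
    continuous_finset_sum _ fun s _ => continuous_const.mul (continuous_pow _)
  have h0 : phiA A 0 = eA A A.rank := by
    rw [phiA, Finset.sum_eq_single A.rank]
    · simp
    · intro s hs hne
      have : A.rank - s ≠ 0 := by simp only [Finset.mem_range] at hs; omega
      rw [zero_pow this, mul_zero]
    · intro h; exact absurd (Finset.self_mem_range_succ _) h
  simpa [h0] using hc.tendsto 0

lemma phiA_ge (A : Matrix m k ℝ) {γ : ℝ} (hγ : 0 ≤ γ) : eA A A.rank ≤ phiA A γ := by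
  rw [phiA]
  have : eA A A.rank = eA A A.rank * γ ^ (A.rank - A.rank) := by simp
  rw [this]
  exact Finset.single_le_sum
    (f := fun s => eA A s * γ ^ (A.rank - s))
    (fun s _ => mul_nonneg (eA_nonneg A s) (pow_nonneg hγ _))
    (Finset.self_mem_range_succ _)

lemma sqrt_prod_range {f : ℕ → ℝ} (hf : ∀ i, 0 ≤ f i) (r : ℕ) :
    Real.sqrt (∏ i ∈ Finset.range r, f i) = ∏ i ∈ Finset.range r, Real.sqrt (f i) := by
  induction r with
  | zero => simp
  | succ r ih =>
    rw [Finset.prod_range_succ, Finset.prod_range_succ,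
      Real.sqrt_mul (Finset.prod_nonneg fun i _ => hf i), ih]

lemma svalsSq_nonneg (A : Matrix m k ℝ) (i : ℕ) : 0 ≤ svalsSq A i := by
  unfold svalsSq
  set l := (((Finset.univ.val.map
      (Matrix.isHermitian_mul_conjTranspose_self A).eigenvalues).sort (· ≤ ·)).reverse)
  rcases Nat.lt_or_ge i l.length with h | h
  · rw [List.getD_eq_getElem l 0 h]
    have hmem : l[i] ∈ l := l.getElem_mem h
    rw [List.mem_reverse, Multiset.mem_sort] at hmem
    obtain ⟨j, -, hj⟩ := Multiset.mem_map.mp hmem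
    rw [← hj]
    exact eigA_nonneg A j
  · rw [List.getD_eq_default _ _ h]

lemma prod_svalsSq (A : Matrix m k ℝ) :
    ∏ i ∈ Finset.range A.rank, svalsSq A i = eA A A.rank := by
  have hrw : ∀ i : ℕ, svalsSq A i
      = (((Finset.univ.val.map (eigA A)).sort (· ≤ ·)).reverse).getD i 0 := fun _ => rfl
  simp only [hrw]
  set eig : m → ℝ := eigA A with heig
  set μ : Multiset ℝ := Finset.univ.val.map eig with hμ
  set l : List ℝ := ((μ.sort (· ≤ ·)).reverse) with hl
  have hcoe : (l : Multiset ℝ) = μ := by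
    rw [hl, Multiset.coe_reverse, Multiset.sort_eq]
  have hsort : l.Pairwise (fun a b => b ≤ a) :=
    List.pairwise_reverse.mpr (Multiset.pairwise_sort μ (· ≤ ·))
  have hnn : ∀ x ∈ l, 0 ≤ x := by
    intro x hx
    rw [List.mem_reverse, Multiset.mem_sort] at hx
    obtain ⟨j, -, hj⟩ := Multiset.mem_map.mp hx
    rw [← hj]
    exact eigA_nonneg A j
  have hcount : l.countP (fun x => decide (x ≠ 0)) = A.rank := by
    have h1 : Multiset.countP (fun x : ℝ => x ≠ 0) (l : Multiset ℝ)
        = l.countP (fun x => decide (x ≠ 0)) := Multiset.coe_countP _ _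
    rw [← h1, hcoe, hμ, Multiset.countP_eq_card_filter, Multiset.filter_map,
      Multiset.card_map, rank_eq_card]
    rfl
  obtain ⟨-, -, hprod⟩ := sorted_list_facts l hsort hnn hcount
  rw [hprod]
  have hfl : ((l.filter (fun x => decide (x ≠ 0)) : List ℝ) : Multiset ℝ)
      = Multiset.map eig ((Finset.univ.filter (fun i => eigA A i ≠ 0)).val) := by
    rw [← Multiset.filter_coe (p := fun x : ℝ => x ≠ 0), hcoe, hμ, Multiset.filter_map]
    rfl
  have : (l.filter (fun x => decide (x ≠ 0))).prod
      = ∏ i ∈ Finset.univ.filter (fun i => eigA A i ≠ 0), eigA A i := by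
    rw [Finset.prod_eq_multiset_prod]
    rw [← hfl]
    rfl
  rw [this, eA, rank_eq_card, esym_card_filter]

lemma prod_svals (A : Matrix m k ℝ) :
    ∏ i ∈ Finset.range A.rank, svals A i = Real.sqrt (eA A A.rank) := by
  rw [← prod_svalsSq A, sqrt_prod_range (svalsSq_nonneg A)]
  rfl

end MatrixFacts
def nodes (ι : Type*) [Fintype ι] : Fin (Fintype.card ι + 1) → ℝ := fun j => (j.val : ℝ)

def valVec (M : Matrix ι ι ℝ) : Fin (Fintype.card ι + 1) → ℝ :=
  fun j => (M + (nodes ι j) • 1).det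

def eC (s : ℕ) (M : Matrix ι ι ℝ) : ℝ :=
  (Lagrange.interpolate Finset.univ (nodes ι) (valVec M)).coeff (Fintype.card ι - s)

lemma nodes_injOn : Set.InjOn (nodes ι) (Finset.univ : Finset (Fin (Fintype.card ι + 1))) :=
  fun a _ b _ h => Fin.ext (Nat.cast_injective h)

lemma eC_eq {M : Matrix ι ι ℝ} (hM : M.IsHermitian) {s : ℕ} (hs : s ≤ Fintype.card ι) :
    eC s M = esym hM.eigenvalues s := by
  set P : ℝ[X] := ∑ t ∈ Finset.range (Fintype.card ι + 1),
    Polynomial.C (esym hM.eigenvalues t) * Polynomial.X ^ (Fintype.card ι - t) with hP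
  have heval : ∀ x : ℝ, P.eval x = (M + x • 1).det := by
    intro x
    rw [det_add_smul_one hM x, prod_add_const, hP]
    rw [Polynomial.eval_finset_sum]
    refine Finset.sum_congr rfl fun t _ => ?_
    simp
  have hdeg : P.degree < (Finset.univ : Finset (Fin (Fintype.card ι + 1))).card := by
    rw [Finset.card_univ, Fintype.card_fin]
    refine lt_of_le_of_lt (Polynomial.degree_sum_le _ _) ?_
    rw [Finset.sup_lt_iff (by exact_mod_cast WithBot.bot_lt_coe _)]
    intro t _
    refine lt_of_le_of_lt (Polynomial.degree_C_mul_X_pow_le _ _) ?_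
    exact_mod_cast Nat.lt_succ_of_le (Nat.sub_le _ _)
  have hinterp : P = Lagrange.interpolate Finset.univ (nodes ι) (valVec M) :=
    Lagrange.eq_interpolate_of_eval_eq _ nodes_injOn hdeg fun j _ => heval (nodes ι j)
  rw [eC, ← hinterp, hP, Polynomial.finset_sum_coeff]
  rw [Finset.sum_eq_single s]
  · simp
  · intro t ht hne
    rw [Polynomial.coeff_C_mul, Polynomial.coeff_X_pow, if_neg, mul_zero]
    simp only [Finset.mem_range] at ht
    omega
  · intro h
    exact absurd (Finset.mem_range.mpr (by omega)) h

lemma continuous_eC (s : ℕ) : Continuous (fun M : Matrix ι ι ℝ => eC s M) := by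
  have h1 : Continuous (fun M : Matrix ι ι ℝ => valVec M) := by
    refine continuous_pi fun j => ?_
    exact (continuous_id.add continuous_const).matrix_det
  have h2 : Continuous (fun vv : Fin (Fintype.card ι + 1) → ℝ =>
      (Lagrange.interpolate Finset.univ (nodes ι) vv).coeff (Fintype.card ι - s)) := by
    exact LinearMap.continuous_of_finiteDimensional
      ((Polynomial.lcoeff ℝ (Fintype.card ι - s)).comp
        (Lagrange.interpolate Finset.univ (nodes ι)))
  exact h2.comp h1


section TensorFacts

def mJ {d : ℕ} (n : Fin d → ℕ) (J : Finset (Fin d)) : ℕ :=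
  Fintype.card (∀ μ : {μ : Fin d // μ ∈ J}, Fin (n μ.1))

def matL {d : ℕ} (n : Fin d → ℕ) (J : Finset (Fin d)) :
    Tensor d n →ₗ[ℝ] Matrix (∀ μ : {μ : Fin d // μ ∈ J}, Fin (n μ.1))
      (∀ μ : {μ : Fin d // μ ∉ J}, Fin (n μ.1)) ℝ where
  toFun X := mat n X J
  map_add' X Y := rfl
  map_smul' c X := rfl

lemma continuous_mat {d : ℕ} (n : Fin d → ℕ) (J : Finset (Fin d)) :
    Continuous fun X : Tensor d n => mat n X J :=
  (matL n J).continuous_of_finiteDimensional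

lemma sqrt_prod_finset {α : Type*} (s : Finset α) (f : α → ℝ) (hf : ∀ i ∈ s, 0 ≤ f i) :
    Real.sqrt (∏ i ∈ s, f i) = ∏ i ∈ s, Real.sqrt (f i) := by
  induction s using Finset.cons_induction with
  | empty => simp
  | cons a s ha ih =>
    rw [Finset.prod_cons, Finset.prod_cons,
      Real.sqrt_mul (hf a (Finset.mem_cons_self a s)),
      ih (fun i hi => hf i (Finset.mem_cons.mpr (Or.inr hi)))]

end TensorFacts
end Aux

/-- convergence of global minimizers of `f^K_γ` as `γ ↘ 0`.
If `X_γ` globally minimizes `f^K_γ` over `L⁻¹(y)` for every `γ > 0` and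
`X* = lim_{γ↘0} X_γ` exists, then `X* ∈ L⁻¹(y)`, `∑_J rank((X*)^{[J]})` equals
`s* = min_{X ∈ L⁻¹(y)} ∑_J rank(X^{[J]})`, and `X*` minimizes
`∏_{J∈K} ∏_{i=1}^{rank X^{[J]}} σ_i^{(J)}(X)` among all feasible `X` with rank sum `s*`.
Moreover, if the feasible point of rank sum `s*` is unique, then `X_γ` converges to it. -/
theorem tendsto_min_of_fK {d ℓ : ℕ} (n : Fin d → ℕ) (K : Finset (Finset (Fin d)))
    (hKne : K.Nonempty) (hK : ∀ J ∈ K, J.Nonempty ∧ J ≠ Finset.univ)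
    (L : Tensor d n →ₗ[ℝ] EuclideanSpace ℝ (Fin ℓ)) (hL : Function.Surjective L)
    (hld : ℓ < ∏ μ, n μ) (y : EuclideanSpace ℝ (Fin ℓ))
    (Xg : ℝ → Tensor d n)
    (hfeas : ∀ γ : ℝ, 0 < γ → L (Xg γ) = y)
    (hmin : ∀ γ : ℝ, 0 < γ → ∀ X : Tensor d n, L X = y → fK n K γ (Xg γ) ≤ fK n K γ X)
    (Xstar : Tensor d n)
    (hlim : Filter.Tendsto Xg (nhdsWithin 0 (Set.Ioi 0)) (nhds Xstar)) :
    L Xstar = y ∧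
    (∑ J ∈ K, (mat n Xstar J).rank)
      = sInf {s : ℕ | ∃ X : Tensor d n, L X = y ∧ (∑ J ∈ K, (mat n X J).rank) = s} ∧
    (∀ X : Tensor d n, L X = y →
      (∑ J ∈ K, (mat n X J).rank)
        = sInf {s : ℕ | ∃ X' : Tensor d n, L X' = y ∧ (∑ J ∈ K, (mat n X' J).rank) = s} →
      (∏ J ∈ K, ∏ i ∈ Finset.range ((mat n Xstar J).rank), svals (mat n Xstar J) i)
        ≤ ∏ J ∈ K, ∏ i ∈ Finset.range ((mat n X J).rank), svals (mat n X J) i) ∧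
    (∀ Xs : Tensor d n,
      (L Xs = y ∧
        (∑ J ∈ K, (mat n Xs J).rank)
          = sInf {s : ℕ | ∃ X' : Tensor d n, L X' = y ∧ (∑ J ∈ K, (mat n X' J).rank) = s} ∧
        (∀ X' : Tensor d n, L X' = y →
          (∑ J ∈ K, (mat n X' J).rank)
            = sInf {s : ℕ | ∃ X'' : Tensor d n, L X'' = y ∧ (∑ J ∈ K, (mat n X'' J).rank) = s} →
          X' = Xs)) →
      Filter.Tendsto Xg (nhdsWithin 0 (Set.Ioi 0)) (nhds Xs)) := by
  classical
  open Aux in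
  set l := nhdsWithin (0:ℝ) (Set.Ioi 0) with hldef
  haveI hlne : l.NeBot := nhdsGT_neBot 0
  set S : Set ℕ := {s : ℕ | ∃ X : Tensor d n, L X = y ∧ (∑ J ∈ K, (mat n X J).rank) = s}
    with hSdef
  obtain ⟨X0, hX0⟩ := hL y
  have hSne : S.Nonempty := ⟨_, X0, hX0, rfl⟩
  obtain ⟨Xhat, hXhat1, hXhat2⟩ : ∃ X : Tensor d n,
      L X = y ∧ (∑ J ∈ K, (mat n X J).rank) = sInf S := Nat.sInf_mem hSne
  have hsle : ∀ X : Tensor d n, L X = y → sInf S ≤ ∑ J ∈ K, (mat n X J).rank :=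
    fun X hX => Nat.sInf_le ⟨X, hX, rfl⟩
  -- feasibility of the limit
  have hLcont : Continuous L := LinearMap.continuous_of_finiteDimensional L
  have hLX : L Xstar = y := by
    have h1 : Filter.Tendsto (fun γ => L (Xg γ)) l (nhds (L Xstar)) :=
      ((hLcont.tendsto _).comp hlim)
    have h2 : Filter.Tendsto (fun γ => L (Xg γ)) l (nhds y) := by
      refine Filter.Tendsto.congr' ?_ tendsto_const_nhds
      filter_upwards [self_mem_nhdsWithin] with γ hγ
      exact (hfeas γ hγ).symm
    exact tendsto_nhds_unique h1 h2
  -- rank bounds and exponent bookkeeping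
  have hrle : ∀ (X : Tensor d n) (J : Finset (Fin d)), (mat n X J).rank ≤ mJ n J :=
    fun X J => rank_le_cardm _
  have hNsum : ∀ X : Tensor d n,
      (∑ J ∈ K, (mJ n J - (mat n X J).rank)) + (∑ J ∈ K, (mat n X J).rank)
        = ∑ J ∈ K, mJ n J := by
    intro X
    rw [← Finset.sum_add_distrib]
    exact Finset.sum_congr rfl fun J _ => Nat.sub_add_cancel (hrle X J)
  set dstar : ℕ := ∑ J ∈ K, (mJ n J - (mat n Xstar J).rank) with hdstar
  -- determinants
  set D : Finset (Fin d) → Tensor d n → ℝ → ℝ :=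
    fun J X γ => (mat n X J * (mat n X J)ᴴ + γ • 1).det with hDdef
  have hDpos : ∀ (J : Finset (Fin d)) (X : Tensor d n) {γ : ℝ}, 0 < γ → 0 < D J X γ :=
    fun J X {γ} hγ => det_pos _ hγ
  have hPpos : ∀ (X : Tensor d n) {γ : ℝ}, 0 < γ → 0 < ∏ J ∈ K, D J X γ :=
    fun X {γ} hγ => Finset.prod_pos fun J _ => hDpos J X hγ
  have hmin' : ∀ {γ : ℝ}, 0 < γ → ∀ X : Tensor d n, L X = y →
      (∏ J ∈ K, D J (Xg γ) γ) ≤ ∏ J ∈ K, D J X γ := by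
    intro γ hγ X hX
    have h := hmin γ hγ X hX
    simp only [fK] at h
    exact (Real.log_le_log_iff (hPpos (Xg γ) hγ) (hPpos X hγ)).mp h
  -- the continuous lower-bound coefficient functions
  set F : Finset (Fin d) → ℝ → ℝ :=
    fun J γ => eC ((mat n Xstar J).rank) (mat n (Xg γ) J * (mat n (Xg γ) J)ᴴ) with hFdef
  have hFeq : ∀ (J : Finset (Fin d)) (γ : ℝ),
      F J γ = eA (mat n (Xg γ) J) ((mat n Xstar J).rank) := fun J γ =>
    eC_eq (Matrix.isHermitian_mul_conjTranspose_self _) (hrle Xstar J)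
  have hFtend : Filter.Tendsto (fun γ => ∏ J ∈ K, F J γ) l
      (nhds (∏ J ∈ K, eA (mat n Xstar J) ((mat n Xstar J).rank))) := by
    refine tendsto_finset_prod _ fun J _ => ?_
    have hc : Continuous fun X : Tensor d n =>
        eC ((mat n Xstar J).rank) (mat n X J * (mat n X J)ᴴ) :=
      (continuous_eC _).comp
        ((continuous_mat n J).matrix_mul (continuous_mat n J).matrix_conjTranspose)
    have heq : eC ((mat n Xstar J).rank) (mat n Xstar J * (mat n Xstar J)ᴴ)
        = eA (mat n Xstar J) ((mat n Xstar J).rank) :=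
      eC_eq (Matrix.isHermitian_mul_conjTranspose_self _) (hrle Xstar J)
    rw [← heq]
    exact (hc.tendsto Xstar).comp hlim
  have hqstar_pos : 0 < ∏ J ∈ K, eA (mat n Xstar J) ((mat n Xstar J).rank) :=
    Finset.prod_pos fun J _ => eA_rank_pos _
  -- the key chain inequality
  have hchainkey : ∀ {γ : ℝ}, 0 < γ → ∀ X : Tensor d n, L X = y →
      (∏ J ∈ K, F J γ) * γ ^ dstar ≤ ∏ J ∈ K, D J X γ := by
    intro γ hγ X hX
    have h1 : ∏ J ∈ K, (eA (mat n (Xg γ) J) ((mat n Xstar J).rank)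
          * γ ^ (mJ n J - (mat n Xstar J).rank))
        = (∏ J ∈ K, F J γ) * γ ^ dstar := by
      rw [Finset.prod_mul_distrib, Finset.prod_pow_eq_pow_sum, ← hdstar]
      congr 1
      exact Finset.prod_congr rfl fun J _ => (hFeq J γ).symm
    rw [← h1]
    refine le_trans (Finset.prod_le_prod ?_ ?_) (hmin' hγ X hX)
    · intro J _
      exact mul_nonneg (eA_nonneg _ _) (pow_nonneg hγ.le _)
    · intro J _
      exact det_lower _ hγ.le (hrle Xstar J)
  -- Part 2 : rank sum of the limit is minimal
  have hrank_star : (∑ J ∈ K, (mat n Xstar J).rank) = sInf S := by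
    by_contra hne
    have hlt : sInf S < ∑ J ∈ K, (mat n Xstar J).rank :=
      lt_of_le_of_ne (hsle Xstar hLX) (Ne.symm hne)
    set t : ℕ := (∑ J ∈ K, (mat n Xstar J).rank) - sInf S with ht
    have hteq : (∑ J ∈ K, (mJ n J - (mat n Xhat J).rank)) = dstar + t := by
      have h1 := hNsum Xhat
      have h2 := hNsum Xstar
      rw [hXhat2] at h1
      rw [← hdstar] at h2
      omega
    set C : ℝ := ∏ J ∈ K, (∑ s ∈ Finset.range (mJ n J + 1), eA (mat n Xhat J) s) with hC
    have hev : ∀ᶠ γ in l, (∏ J ∈ K, F J γ) ≤ C * γ ^ t := by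
      have h1 : ∀ᶠ γ : ℝ in l, 0 < γ := by
        filter_upwards [self_mem_nhdsWithin] with γ hγ using hγ
      have h2 : ∀ᶠ γ : ℝ in l, γ < 1 :=
        nhdsWithin_le_nhds (eventually_lt_nhds (by norm_num : (0:ℝ) < 1))
      filter_upwards [h1, h2] with γ hγ0 hγ1
      have hupper : ∏ J ∈ K, D J Xhat γ ≤ C * γ ^ (dstar + t) := by
        calc ∏ J ∈ K, D J Xhat γ
            ≤ ∏ J ∈ K, ((∑ s ∈ Finset.range (mJ n J + 1), eA (mat n Xhat J) s)
                * γ ^ (mJ n J - (mat n Xhat J).rank)) := by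
              refine Finset.prod_le_prod ?_ ?_
              · intro J _; exact (hDpos J Xhat hγ0).le
              · intro J _; exact det_upper _ hγ0.le hγ1.le
          _ = C * γ ^ (∑ J ∈ K, (mJ n J - (mat n Xhat J).rank)) := by
              rw [Finset.prod_mul_distrib, Finset.prod_pow_eq_pow_sum]
          _ = C * γ ^ (dstar + t) := by rw [hteq]
      have hcomb := le_trans (hchainkey hγ0 Xhat hXhat1) hupper
      rw [pow_add, show C * (γ ^ dstar * γ ^ t) = (C * γ ^ t) * γ ^ dstar by ring] at hcomb
      exact le_of_mul_le_mul_right hcomb (pow_pos hγ0 _)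
    have hlim2 : Filter.Tendsto (fun γ : ℝ => C * γ ^ t) l (nhds 0) := by
      have hcont : Filter.Tendsto (fun γ : ℝ => C * γ ^ t) (nhds 0) (nhds (C * 0 ^ t)) :=
        ((continuous_const.mul (continuous_pow t)).tendsto 0)
      rw [zero_pow (by omega : t ≠ 0), mul_zero] at hcont
      exact hcont.mono_left nhdsWithin_le_nhds
    exact absurd (le_of_tendsto_of_tendsto hFtend hlim2 hev) (not_le.mpr hqstar_pos)
  -- Part 3 : minimality of the singular value product
  have hq_le : ∀ X : Tensor d n, L X = y → (∑ J ∈ K, (mat n X J).rank) = sInf S →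
      (∏ J ∈ K, eA (mat n Xstar J) ((mat n Xstar J).rank))
        ≤ ∏ J ∈ K, eA (mat n X J) ((mat n X J).rank) := by
    intro X hX hXr
    have hdeq : (∑ J ∈ K, (mJ n J - (mat n X J).rank)) = dstar := by
      have h1 := hNsum X
      have h2 := hNsum Xstar
      rw [hXr] at h1
      rw [← hdstar, hrank_star] at h2
      omega
    have hev : ∀ᶠ γ in l, (∏ J ∈ K, F J γ) ≤ ∏ J ∈ K, phiA (mat n X J) γ := by
      filter_upwards [self_mem_nhdsWithin] with γ hγ0'
      have hγ0 : (0:ℝ) < γ := hγ0'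
      have heqX : ∏ J ∈ K, D J X γ = (∏ J ∈ K, phiA (mat n X J) γ) * γ ^ dstar := by
        rw [← hdeq]
        calc ∏ J ∈ K, D J X γ
            = ∏ J ∈ K, (γ ^ (mJ n J - (mat n X J).rank) * phiA (mat n X J) γ) :=
              Finset.prod_congr rfl fun J _ => det_eq_phi _ γ
          _ = _ := by rw [Finset.prod_mul_distrib, Finset.prod_pow_eq_pow_sum, mul_comm]
      have hchain := hchainkey hγ0 X hX
      rw [heqX] at hchain
      exact le_of_mul_le_mul_right hchain (pow_pos hγ0 _)
    have hphit : Filter.Tendsto (fun γ => ∏ J ∈ K, phiA (mat n X J) γ) l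
        (nhds (∏ J ∈ K, eA (mat n X J) ((mat n X J).rank))) :=
      tendsto_finset_prod _ fun J _ => (tendsto_phi _).mono_left nhdsWithin_le_nhds
    exact le_of_tendsto_of_tendsto hFtend hphit hev
  refine ⟨hLX, hrank_star, ?_, ?_⟩
  · intro X hX hXr
    have h := hq_le X hX hXr
    have e1 : ∀ Y : Tensor d n,
        (∏ J ∈ K, ∏ i ∈ Finset.range ((mat n Y J).rank), svals (mat n Y J) i)
          = Real.sqrt (∏ J ∈ K, eA (mat n Y J) ((mat n Y J).rank)) := by
      intro Y
      rw [sqrt_prod_finset K _ (fun J _ => eA_nonneg _ _)]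
      exact Finset.prod_congr rfl fun J _ => (prod_svals _).trans rfl
    rw [e1 Xstar, e1 X]
    exact Real.sqrt_le_sqrt h
  · rintro Xs ⟨hfs, hrs, huniq⟩
    have hXX : Xstar = Xs := huniq Xstar hLX hrank_star
    exact hXX ▸ hlim

end
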